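/- arXiv:2604.08981 — 2 statements merged into one kernel-verified Lean document; each statement's English description precedes it below -/
import Mathlib

section
/- (Alishahi's torsion order lemma) Let C and C' be chain complexes of F[H]-modules and suppose there exist chain maps f : C → C' and g : C' → C and a natural number t such that g ∘ f is chain homotopic to H^t · id_C and f ∘ g is chain homotopic to H^t · id_{C'}. If the maximal H-torsion orders ord(H_*(C)) and ord(H_*(C')) of the homologies are finite, then |ord(H_*(C)) − ord(H_*(C'))| ≤ t. -/
open Polynomial

/-- The coefficient ring `F[H]` with `F = ℤ/2ℤ`; the variable `H` is `Polynomial.X`. -/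
abbrev R2 : Type := Polynomial (ZMod 2)

/-- An element of an `F[H]`-module is `H`-torsion if some power of `H` kills it. -/
def IsHTorsion {M : Type*} [AddCommGroup M] [Module R2 M] (x : M) : Prop :=
  ∃ n : ℕ, (X : R2) ^ n • x = 0

/-- The `H`-torsion order of an element: the least `n` with `H^n • x = 0`. -/
noncomputable def ordElem {M : Type*} [AddCommGroup M] [Module R2 M] (x : M) : ℕ :=
  sInf {n : ℕ | (X : R2) ^ n • x = 0}

open CategoryTheory

/-- The set of `H`-torsion orders occurring among torsion elements of the total
homology of a chain complex of `F[H]`-modules. -/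
noncomputable def homologyTorsionOrders (C : ChainComplex (ModuleCat R2) ℕ) : Set ℕ :=
  {n : ℕ | ∃ (i : ℕ) (x : C.homology i), IsHTorsion x ∧ n = ordElem x}

/-- The maximal `H`-torsion order of the total homology `H_*(C)`. -/
noncomputable def ordHomology (C : ChainComplex (ModuleCat R2) ℕ) : ℕ :=
  sSup (homologyTorsionOrders C)

/-!
If `f_* : H_*(C) → H_*(C')` and `g_* : H_*(C') → H_*(C)` satisfy `g_* ∘ f_* = H^t`, then every
torsion class `x` of `H_*(C)` has `H^(ord(f_* x) + t) • x = g_* (H^(ord(f_* x)) • f_* x) = 0`,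
so `ord x ≤ ord(f_* x) + t ≤ ord(H_*(C')) + t`. The symmetric argument gives the other bound.
-/

section TorsionOrder

variable {M N : Type*} [AddCommGroup M] [Module R2 M] [AddCommGroup N] [Module R2 N]

lemma ordElem_le {x : M} {n : ℕ} (h : (X : R2) ^ n • x = 0) : ordElem x ≤ n :=
  Nat.sInf_le h

lemma ordElem_zero : ordElem (0 : M) = 0 :=
  Nat.le_zero.mp (ordElem_le (smul_zero _))

lemma IsHTorsion.pow_ordElem_smul {x : M} (hx : IsHTorsion x) : (X : R2) ^ ordElem x • x = 0 :=
  Nat.sInf_mem hx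

lemma IsHTorsion.map {x : M} (hx : IsHTorsion x) (φ : M →ₗ[R2] N) : IsHTorsion (φ x) := by
  obtain ⟨n, hn⟩ := hx
  exact ⟨n, by rw [← map_smul, hn, map_zero]⟩

lemma ordElem_le_ordElem_add_of_map_eq {x : M} {y : N} (hy : IsHTorsion y) (ψ : N →ₗ[R2] M)
    {t : ℕ} (hψ : ψ y = (X : R2) ^ t • x) : ordElem x ≤ ordElem y + t := by
  apply ordElem_le
  rw [pow_add, mul_smul, ← hψ, ← map_smul, hy.pow_ordElem_smul, map_zero]

end TorsionOrder

namespace HomologicalComplex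

variable {R C ι : Type*} [Semiring R] [Category C] [Preadditive C] [Linear R C]
  {c : ComplexShape ι} {K L : HomologicalComplex C c}

lemma homologyMap_smul (a : R) (φ : K ⟶ L) (i : ι) [K.HasHomology i] [L.HasHomology i] :
    homologyMap (a • φ) i = a • homologyMap φ i := by
  have : (shortComplexFunctor C c i).map (a • φ) = a • (shortComplexFunctor C c i).map φ := by
    ext <;> rfl
  dsimp only [homologyMap]
  rw [this, ShortComplex.homologyMap_smul]
  rfl

end HomologicalComplex

lemma Homotopy.homologyMap_comp_apply_of_smul_id {R ι : Type*} [CommRing R]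
    {c : ComplexShape ι} {K L : HomologicalComplex (ModuleCat R) c} {f : K ⟶ L} {g : L ⟶ K}
    {a : R} (h : Homotopy (f ≫ g) (a • 𝟙 K)) (i : ι) (x : K.homology i) :
    (HomologicalComplex.homologyMap g i).hom ((HomologicalComplex.homologyMap f i).hom x)
      = a • x := by
  have := h.homologyMap_eq i
  rw [HomologicalComplex.homologyMap_comp, HomologicalComplex.homologyMap_smul,
    HomologicalComplex.homologyMap_id] at this
  exact congrArg (fun φ => φ.hom x) this

lemma zero_mem_homologyTorsionOrders (C : ChainComplex (ModuleCat R2) ℕ) :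
    0 ∈ homologyTorsionOrders C :=
  ⟨0, 0, ⟨0, smul_zero _⟩, ordElem_zero.symm⟩

lemma ordHomology_le_add {C C' : ChainComplex (ModuleCat R2) ℕ} {f : C ⟶ C'} {g : C' ⟶ C}
    {t : ℕ} (h : Homotopy (f ≫ g) (((X : R2) ^ t) • 𝟙 C))
    (hC' : BddAbove (homologyTorsionOrders C')) :
    ordHomology C ≤ ordHomology C' + t := by
  apply csSup_le ⟨0, zero_mem_homologyTorsionOrders C⟩
  rintro _ ⟨i, x, hx, rfl⟩
  have hfx : IsHTorsion ((HomologicalComplex.homologyMap f i).hom x) := hx.map _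
  have hle : ordElem ((HomologicalComplex.homologyMap f i).hom x) ≤ ordHomology C' :=
    le_csSup hC' ⟨i, _, hfx, rfl⟩
  have := ordElem_le_ordElem_add_of_map_eq hfx _ (h.homologyMap_comp_apply_of_smul_id i x)
  omega

/-- Alishahi's torsion order lemma: if `g ∘ f ≃ H^t • id` and `f ∘ g ≃ H^t • id`
up to chain homotopy, then the maximal `H`-torsion orders of the homologies of
`C` and `C'` (assumed finite) differ by at most `t`. -/
theorem ordHomology_diff_le
    (C C' : ChainComplex (ModuleCat R2) ℕ) (f : C ⟶ C') (g : C' ⟶ C) (t : ℕ)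
    (h₁ : Nonempty (Homotopy (f ≫ g) (((X : R2) ^ t) • 𝟙 C)))
    (h₂ : Nonempty (Homotopy (g ≫ f) (((X : R2) ^ t) • 𝟙 C')))
    (hC : BddAbove (homologyTorsionOrders C))
    (hC' : BddAbove (homologyTorsionOrders C')) :
    |(ordHomology C : ℤ) - (ordHomology C' : ℤ)| ≤ (t : ℤ) := by
  have hle := ordHomology_le_add h₁.some hC'
  have hge := ordHomology_le_add h₂.some hC
  rw [abs_sub_le_iff]
  constructor <;> omega
end

section
/- Let M, N be F[H]-modules with finite maximal torsion orders and suppose there are module homomorphisms φ : M → N and ψ : N → M with ψ ∘ φ = H^t · id_M and φ ∘ ψ = H^t · id_N. Then |ord(M) − ord(N)| ≤ t. -/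
open Polynomial

/-- The set of `H`-torsion orders of torsion elements of a module. -/
noncomputable def torsionOrders (M : Type*) [AddCommGroup M] [Module R2 M] : Set ℕ :=
  {n : ℕ | ∃ x : M, IsHTorsion x ∧ n = ordElem x}

/-- The maximal `H`-torsion order of a module (`0` if the only torsion element is `0`). -/
noncomputable def ordMod (M : Type*) [AddCommGroup M] [Module R2 M] : ℕ :=
  sSup (torsionOrders M)

lemma ordElem_spec {M : Type*} [AddCommGroup M] [Module R2 M] {x : M}
    (hx : IsHTorsion x) : (X : R2) ^ (ordElem x) • x = 0 :=
  Nat.sInf_mem hx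

lemma key {M N : Type*} [AddCommGroup M] [Module R2 M] [AddCommGroup N] [Module R2 N]
    (hN : BddAbove (torsionOrders N))
    (φ : M →ₗ[R2] N) (ψ : N →ₗ[R2] M) (t : ℕ)
    (hψφ : ∀ x : M, ψ (φ x) = (X : R2) ^ t • x) :
    ordMod M ≤ ordMod N + t := by
  have h0 : (0 : ℕ) ∈ torsionOrders M := by
    refine ⟨0, ⟨0, by simp⟩, ?_⟩
    simp only [ordElem]
    exact (Nat.sInf_eq_zero.2 (Or.inl (by simp))).symm
  refine csSup_le ⟨0, h0⟩ ?_
  rintro n ⟨x, hx, rfl⟩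
  have hφx : IsHTorsion (φ x) := by
    obtain ⟨n, hn⟩ := hx
    exact ⟨n, by rw [← map_smul, hn, map_zero]⟩
  have hmem : ordElem (φ x) ∈ torsionOrders N := ⟨φ x, hφx, rfl⟩
  have h1 : ordElem (φ x) ≤ ordMod N := le_csSup hN hmem
  have h2 : ordElem x ≤ ordElem (φ x) + t := by
    apply Nat.sInf_le
    show (X : R2) ^ (ordElem (φ x) + t) • x = 0
    rw [pow_add, mul_smul, ← hψφ, ← map_smul, ordElem_spec hφx, map_zero]
  omega

/-- Module-level version of Alishahi's torsion-order lemma: if `ψ ∘ φ = H^t • id`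
and `φ ∘ ψ = H^t • id`, then the maximal torsion orders differ by at most `t`. -/
theorem ordMod_diff_le_of_comp_eq_smul_pow
    {M N : Type*} [AddCommGroup M] [Module R2 M] [AddCommGroup N] [Module R2 N]
    (hM : BddAbove (torsionOrders M)) (hN : BddAbove (torsionOrders N))
    (φ : M →ₗ[R2] N) (ψ : N →ₗ[R2] M) (t : ℕ)
    (hψφ : ∀ x : M, ψ (φ x) = (X : R2) ^ t • x)
    (hφψ : ∀ y : N, φ (ψ y) = (X : R2) ^ t • y) :
    |(ordMod M : ℤ) - (ordMod N : ℤ)| ≤ (t : ℤ) := by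
  have h1 := key hN φ ψ t hψφ
  have h2 := key hM ψ φ t hφψ
  rw [abs_sub_le_iff]
  omega
end
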